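/- arXiv:1404.0341 — 5 statements merged into one kernel-verified Lean document; each statement's English description precedes it below -/
import Mathlib

section
/- Let p and q be positive integers with p < q and gcd(p,q) = 1. Suppose q = k·r·s for positive integers k, r, s with r < s, and suppose p divides r + s. Define N₁ = k·r·(r+s)/p and N₂ = k·s·(r+s)/p. Then N₁ and N₂ are positive integers with N₁ < N₂ and 1/N₁ + 1/N₂ = p/q (as rational numbers). -/
theorem stmt_0 (p q k r s : ℕ) (hp : 0 < p) (hpq : p < q) (hcop : Nat.gcd p q = 1)
    (hk : 0 < k) (hr : 0 < r) (hs : 0 < s) (hq : q = k * r * s) (hrs : r < s)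
    (hdvd : p ∣ r + s) :
    0 < k * r * (r + s) / p ∧ 0 < k * s * (r + s) / p ∧
      k * r * (r + s) / p < k * s * (r + s) / p ∧
      (1 : ℚ) / (k * r * (r + s) / p : ℕ) + 1 / (k * s * (r + s) / p : ℕ) = p / q := by
  obtain ⟨m, hm⟩ := hdvd
  have hm0 : 0 < m := by
    rcases Nat.eq_zero_or_pos m with h | h
    · simp [h] at hm; omega
    · exact h
  have h1 : k * r * (r + s) / p = k * r * m := by
    rw [hm, ← mul_assoc, mul_comm (k*r) p, mul_assoc, Nat.mul_div_cancel_left _ hp]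
  have h2 : k * s * (r + s) / p = k * s * m := by
    rw [hm, ← mul_assoc, mul_comm (k*s) p, mul_assoc, Nat.mul_div_cancel_left _ hp]
  rw [h1, h2]
  refine ⟨by positivity, by positivity, by
    exact (Nat.mul_lt_mul_right hm0).mpr ((Nat.mul_lt_mul_left hk).mpr hrs), ?_⟩
  have hq0 : (0:ℚ) < q := by exact_mod_cast lt_trans hp hpq
  have hmq : (p:ℚ) * m = r + s := by exact_mod_cast hm.symm
  rw [div_add_div _ _ (by positivity) (by positivity), div_eq_div_iff (by positivity) (ne_of_gt hq0)]
  push_cast [hq]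
  linear_combination (-(k:ℚ)^2 * r * s * m) * hmq
end

section
/- Let p and q be positive integers with p < q and gcd(p,q) = 1. If N₁ < N₂ are positive integers with 1/N₁ + 1/N₂ = p/q (as rational numbers), then there exist positive integers k, r, s with q = k·r·s, r < s, p dividing r + s, N₁ = k·r·(r+s)/p, and N₂ = k·s·(r+s)/p. In particular, every two-term unit-fraction decomposition of p/q arises from a triplet factorization of q. -/
theorem stmt_1 (p q N₁ N₂ : ℕ) (hp : 0 < p) (hpq : p < q) (hcop : Nat.gcd p q = 1)
    (hN₁ : 0 < N₁) (hlt : N₁ < N₂)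
    (heq : (1 : ℚ) / N₁ + 1 / N₂ = p / q) :
    ∃ k r s : ℕ, 0 < k ∧ 0 < r ∧ 0 < s ∧ q = k * r * s ∧ r < s ∧ p ∣ r + s ∧
      N₁ = k * r * (r + s) / p ∧ N₂ = k * s * (r + s) / p := by
  have hq : 0 < q := hp.trans hpq
  have hN₂ : 0 < N₂ := hN₁.trans hlt
  have key : q * (N₁ + N₂) = p * (N₁ * N₂) := by
    have h1 : (N₁:ℚ) ≠ 0 := Nat.cast_ne_zero.2 hN₁.ne'
    have h2 : (N₂:ℚ) ≠ 0 := Nat.cast_ne_zero.2 hN₂.ne'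
    have h3 : (q:ℚ) ≠ 0 := Nat.cast_ne_zero.2 hq.ne'
    field_simp at heq
    have : (q:ℚ) * (N₁ + N₂) = p * (N₁ * N₂) := by push_cast; linarith
    exact_mod_cast this
  set g := Nat.gcd N₁ N₂ with hgdef
  have hg : 0 < g := Nat.gcd_pos_of_pos_left _ hN₁
  set a := N₁ / g with hadef
  set b := N₂ / g with hbdef
  have ha : N₁ = g * a := (Nat.mul_div_cancel' (Nat.gcd_dvd_left _ _)).symm
  have hb : N₂ = g * b := (Nat.mul_div_cancel' (Nat.gcd_dvd_right _ _)).symm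
  have hab : Nat.Coprime a b := Nat.coprime_div_gcd_div_gcd hg
  have hapos : 0 < a := by
    rcases Nat.eq_zero_or_pos a with h | h
    · rw [h, mul_zero] at ha; omega
    · exact h
  have hbpos : 0 < b := by
    rcases Nat.eq_zero_or_pos b with h | h
    · rw [h, mul_zero] at hb; omega
    · exact h
  have haltb : a < b := by
    rw [ha, hb] at hlt
    exact lt_of_mul_lt_mul_left hlt (Nat.zero_le g)
  have key2 : q * (a + b) = p * g * (a * b) := by
    apply Nat.eq_of_mul_eq_mul_left hg
    calc g * (q * (a + b)) = q * (g * a + g * b) := by ring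
      _ = p * (g * a * (g * b)) := by rw [← ha, ← hb]; exact key
      _ = g * (p * g * (a * b)) := by ring
  have hcop_ab : Nat.Coprime (a * b) (a + b) := by
    have h1 : Nat.Coprime a (a + b) := by
      simpa [Nat.coprime_add_self_right] using hab
    have h2 : Nat.Coprime b (a + b) := by
      simpa [Nat.coprime_add_self_left] using hab.symm
    exact Nat.Coprime.mul h1 h2
  have hdvd : a * b ∣ q := by
    have h : a * b ∣ q * (a + b) := ⟨p * g, by linarith [key2]⟩
    exact (Nat.Coprime.dvd_of_dvd_mul_right hcop_ab h)
  set k := q / (a * b) with hkdef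
  have hk : q = k * (a * b) := (Nat.div_mul_cancel hdvd).symm
  have hkpos : 0 < k := by
    rcases Nat.eq_zero_or_pos k with h | h
    · rw [h, zero_mul] at hk; omega
    · exact h
  have key3 : k * (a + b) = p * g := by
    have habpos : 0 < a * b := Nat.mul_pos hapos hbpos
    apply Nat.eq_of_mul_eq_mul_left habpos
    calc (a * b) * (k * (a + b)) = (k * (a * b)) * (a + b) := by ring
      _ = q * (a + b) := by rw [← hk]
      _ = p * g * (a * b) := key2
      _ = (a * b) * (p * g) := by ring
  have hpk : Nat.Coprime p k := by
    exact Nat.Coprime.coprime_dvd_right ⟨a * b, hk⟩ hcop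
  have hpdvd : p ∣ a + b := by
    have : p ∣ k * (a + b) := ⟨g, key3⟩
    exact hpk.dvd_of_dvd_mul_left this
  refine ⟨k, a, b, hkpos, hapos, hbpos, by rw [hk]; ring, haltb, hpdvd, ?_, ?_⟩
  · have : k * a * (a + b) = p * (g * a) := by
      calc k * a * (a + b) = a * (k * (a + b)) := by ring
        _ = a * (p * g) := by rw [key3]
        _ = p * (g * a) := by ring
    rw [ha, this, Nat.mul_div_cancel_left _ hp]
  · have : k * b * (a + b) = p * (g * b) := by
      calc k * b * (a + b) = b * (k * (a + b)) := by ring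
        _ = b * (p * g) := by rw [key3]
        _ = p * (g * b) := by ring
    rw [hb, this, Nat.mul_div_cancel_left _ hp]
end

section
/- Let p and q be positive integers with p < q and gcd(p,q) = 1, and suppose N₁ < N₂ are positive integers with 1/N₁ + 1/N₂ = p/q. Let g = gcd(N₁,N₂), r = N₁/g and s = N₂/g. Then gcd(r,s) = 1, p divides r + s, the product r·s divides q, and g·p·r·s = q·(r+s); equivalently g = (q/(r·s))·(r+s)/p. -/
theorem stmt_2 (p q N₁ N₂ : ℕ) (hp : 0 < p) (hpq : p < q) (hcop : Nat.gcd p q = 1)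
    (hN₁ : 0 < N₁) (hlt : N₁ < N₂)
    (heq : (1 : ℚ) / N₁ + 1 / N₂ = p / q) :
    Nat.gcd (N₁ / Nat.gcd N₁ N₂) (N₂ / Nat.gcd N₁ N₂) = 1 ∧
    p ∣ (N₁ / Nat.gcd N₁ N₂) + (N₂ / Nat.gcd N₁ N₂) ∧
    (N₁ / Nat.gcd N₁ N₂) * (N₂ / Nat.gcd N₁ N₂) ∣ q ∧
    Nat.gcd N₁ N₂ * p * ((N₁ / Nat.gcd N₁ N₂) * (N₂ / Nat.gcd N₁ N₂)) =
      q * ((N₁ / Nat.gcd N₁ N₂) + (N₂ / Nat.gcd N₁ N₂)) ∧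
    Nat.gcd N₁ N₂ =
      (q / ((N₁ / Nat.gcd N₁ N₂) * (N₂ / Nat.gcd N₁ N₂))) *
        (((N₁ / Nat.gcd N₁ N₂) + (N₂ / Nat.gcd N₁ N₂)) / p) := by
  have hN₂ : 0 < N₂ := hN₁.trans hlt
  have hq : 0 < q := hp.trans hpq
  set g := Nat.gcd N₁ N₂ with hgdef
  have hg : 0 < g := Nat.gcd_pos_of_pos_left _ hN₁
  set r := N₁ / g with hrdef
  set s := N₂ / g with hsdef
  have hgr : g * r = N₁ := Nat.mul_div_cancel' (Nat.gcd_dvd_left _ _)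
  have hgs : g * s = N₂ := Nat.mul_div_cancel' (Nat.gcd_dvd_right _ _)
  have hr : 0 < r := Nat.div_pos (Nat.le_of_dvd hN₁ (Nat.gcd_dvd_left _ _)) hg
  have hs : 0 < s := Nat.div_pos (Nat.le_of_dvd hN₂ (Nat.gcd_dvd_right _ _)) hg
  have hrs : Nat.Coprime r s := Nat.coprime_div_gcd_div_gcd hg
  -- main natural-number equation
  have key : q * (N₁ + N₂) = p * (N₁ * N₂) := by
    have h1 : (N₁ : ℚ) ≠ 0 := by positivity
    have h2 : (N₂ : ℚ) ≠ 0 := by positivity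
    have h3 : (q : ℚ) ≠ 0 := by positivity
    field_simp at heq
    have : (q : ℚ) * (N₁ + N₂) = p * (N₁ * N₂) := by ring_nf; ring_nf at heq; linarith
    exact_mod_cast this
  have key2 : q * (r + s) = p * g * (r * s) := by
    have : g * (q * (r + s)) = g * (p * g * (r * s)) := by
      calc g * (q * (r + s)) = q * (g * r + g * s) := by ring
        _ = p * (N₁ * N₂) := by rw [hgr, hgs]; exact key
        _ = g * (p * g * (r * s)) := by rw [← hgr, ← hgs]; ring
    exact Nat.eq_of_mul_eq_mul_left hg this
  have hsum : Nat.Coprime (r * s) (r + s) := by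
    have h1 : Nat.Coprime r (r + s) := Nat.coprime_self_add_right.mpr hrs
    have h2 : Nat.Coprime s (r + s) := Nat.coprime_add_self_right.mpr hrs.symm
    exact h1.mul h2
  have hrsq : r * s ∣ q := by
    have : r * s ∣ q * (r + s) := key2 ▸ ⟨p * g, by ring⟩
    exact (Nat.Coprime.dvd_of_dvd_mul_right hsum this)
  have hpdvd : p ∣ r + s := by
    have : p ∣ q * (r + s) := key2 ▸ ⟨g * (r * s), by ring⟩
    exact (Nat.Coprime.dvd_of_dvd_mul_left hcop this)
  have heq4 : g * p * (r * s) = q * (r + s) := by rw [key2]; ring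
  refine ⟨hrs, hpdvd, hrsq, heq4, ?_⟩
  obtain ⟨a, ha⟩ := hrsq
  obtain ⟨b, hb⟩ := hpdvd
  have ha' : q / (r * s) = a := by rw [ha, Nat.mul_div_cancel_left _ (by positivity)]
  have hb' : (r + s) / p = b := by rw [hb, Nat.mul_div_cancel_left _ hp]
  rw [ha', hb']
  have h := heq4
  rw [ha, hb] at h
  have h2 : (p * (r * s)) * g = (p * (r * s)) * (a * b) := by ring_nf at h ⊢; linarith
  exact Nat.eq_of_mul_eq_mul_left (by positivity) h2
end

section
/- Let q be an odd prime. If N₁ < N₂ are positive integers with 1/N₁ + 1/N₂ = 2/q (as rational numbers), then N₁ = (q+1)/2 and N₂ = q·(q+1)/2. That is, for q an odd prime the decomposition of 2/q into two distinct unit fractions is unique. -/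
theorem stmt_6 (q N₁ N₂ : ℕ) (hq : Nat.Prime q) (hodd : Odd q)
    (hN₁ : 0 < N₁) (hlt : N₁ < N₂)
    (heq : (1 : ℚ) / N₁ + 1 / N₂ = 2 / q) :
    N₁ = (q + 1) / 2 ∧ N₂ = q * (q + 1) / 2 := by
  have hN₂ : 0 < N₂ := lt_trans hN₁ hlt
  have hq0 : 0 < q := hq.pos
  have hq3 : 3 ≤ q := by
    obtain ⟨t, ht⟩ := hodd
    have := hq.two_le
    omega
  have h1 : (N₁ : ℚ) ≠ 0 := by positivity
  have h2 : (N₂ : ℚ) ≠ 0 := by positivity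
  have h3 : (q : ℚ) ≠ 0 := by positivity
  have keyQ : (q : ℚ) * (N₁ + N₂) = 2 * (N₁ * N₂) := by
    field_simp at heq
    linarith
  have key : q * (N₁ + N₂) = 2 * (N₁ * N₂) := by exact_mod_cast keyQ
  -- N₁ < q
  have hN₁q : N₁ < q := by
    by_contra h
    push_neg at h
    nlinarith [key, hlt, hN₁]
  -- q ∣ N₂
  have hdvd : q ∣ 2 * (N₁ * N₂) := ⟨N₁ + N₂, key.symm⟩
  have hqN₂ : q ∣ N₂ := by
    rcases (Nat.Prime.dvd_mul hq).mp hdvd with h | h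
    · exfalso
      have := Nat.le_of_dvd (by norm_num) h
      omega
    · rcases (Nat.Prime.dvd_mul hq).mp h with h' | h'
      · exfalso
        have := Nat.le_of_dvd hN₁ h'
        omega
      · exact h'
  obtain ⟨m, hm⟩ := hqN₂
  have hm0 : 0 < m := by
    rcases Nat.eq_zero_or_pos m with h | h
    · subst h; omega
    · exact h
  -- reduce: N₁ + q*m = 2*N₁*m
  have key2 : N₁ + q * m = 2 * N₁ * m := by
    have : q * (N₁ + q * m) = q * (2 * N₁ * m) := by
      rw [hm] at key; ring_nf; ring_nf at key; nlinarith [key]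
    exact Nat.eq_of_mul_eq_mul_left hq0 this
  -- let k = 2*m - 1, then q*m = N₁*k and k ∣ q
  set k := 2 * m - 1 with hk
  have hk1 : 2 * m = k + 1 := by omega
  have key3 : q * m = N₁ * k := by
    have : N₁ + q * m = N₁ * (k + 1) := by rw [← hk1]; linarith [key2, Nat.mul_comm (2 * N₁) m]
    nlinarith [this]
  have hkdvdZ : (k : ℤ) ∣ (q : ℤ) := by
    refine ⟨2 * (N₁ : ℤ) - (q : ℤ), ?_⟩
    have e2 : (N₁ : ℤ) + q * m = 2 * N₁ * m := by exact_mod_cast key2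
    have e1 : (2 : ℤ) * m = k + 1 := by exact_mod_cast hk1
    nlinarith [e2, e1]
  have hkdvd : k ∣ q := by exact_mod_cast hkdvdZ
  rcases (Nat.Prime.eq_one_or_self_of_dvd hq k hkdvd) with hk1' | hkq
  · -- k = 1, m = 1, N₂ = q, N₁ = q contradiction
    exfalso
    have hm1 : m = 1 := by omega
    have : q = N₁ := by
      have := key3
      rw [hk1', hm1] at this
      omega
    omega
  · -- k = q, m = (q+1)/2
    have hmq : 2 * m = q + 1 := by omega
    have hN₁m : N₁ = m := by
      have : q * m = N₁ * q := by rw [hkq] at key3; exact key3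
      have : q * m = q * N₁ := by rw [this]; ring
      exact (Nat.eq_of_mul_eq_mul_left hq0 this).symm
    constructor
    · omega
    · rw [hm]
      have : q * (q + 1) = 2 * (q * m) := by rw [← hmq]; ring
      omega
end

section
/- Let l, m, r₁, s₂ be positive integers. Then, as rational numbers, 1/(l·(m+r₁)) + 1/(m·(l+s₂)) = 1/(l·m) if and only if r₁·s₂ = l·m. Moreover, if l, m, r₁, s₂ are all odd and r₁·s₂ = l·m, then D₁ = l·(m+r₁)/2 and D₂ = m·(l+s₂)/2 are positive integers and 2/(l·m) = 1/D₁ + 1/D₂. -/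
private lemma aux_9 (l m r s : ℚ) (hl : 0 < l) (hm : 0 < m) (hr : 0 < r) (hs : 0 < s) :
    (1 / (l * (m + r)) + 1 / (m * (l + s)) = 1 / (l * m)) ↔ r * s = l * m := by
  rw [div_add_div _ _ (by positivity) (by positivity), div_eq_div_iff (by positivity) (by positivity)]
  constructor
  · intro h
    have h2 : (l*m)*(r*s) = (l*m)*(l*m) := by linear_combination -h
    exact mul_left_cancel₀ (by positivity) h2
  · intro h; linear_combination -(l*m)*h

theorem stmt_9 (l m r₁ s₂ : ℕ) (hl : 0 < l) (hm : 0 < m) (hr₁ : 0 < r₁) (hs₂ : 0 < s₂) :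
    ((1 : ℚ) / (l * (m + r₁)) + 1 / (m * (l + s₂)) = 1 / (l * m) ↔ r₁ * s₂ = l * m) ∧
    (Odd l → Odd m → Odd r₁ → Odd s₂ → r₁ * s₂ = l * m →
      0 < l * (m + r₁) / 2 ∧ 0 < m * (l + s₂) / 2 ∧
        (2 : ℚ) / (l * m) =
          1 / ((l * (m + r₁) / 2 : ℕ) : ℚ) + 1 / ((m * (l + s₂) / 2 : ℕ) : ℚ)) := by
  have hl' : (0:ℚ) < l := by exact_mod_cast hl
  have hm' : (0:ℚ) < m := by exact_mod_cast hm
  have hr' : (0:ℚ) < r₁ := by exact_mod_cast hr₁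
  have hs' : (0:ℚ) < s₂ := by exact_mod_cast hs₂
  have hiff : (1 : ℚ) / (l * (m + r₁)) + 1 / (m * (l + s₂)) = 1 / (l * m) ↔ r₁ * s₂ = l * m := by
    rw [aux_9 _ _ _ _ hl' hm' hr' hs']
    exact_mod_cast Iff.rfl
  refine ⟨hiff, fun ol om or os hkey => ?_⟩
  have h1 : 2 ∣ l * (m + r₁) := Dvd.dvd.mul_left (Even.two_dvd (Odd.add_odd om or)) l
  have h2 : 2 ∣ m * (l + s₂) := Dvd.dvd.mul_left (Even.two_dvd (Odd.add_odd ol os)) m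
  have hp1 : 0 < l * (m + r₁) := by positivity
  have hp2 : 0 < m * (l + s₂) := by positivity
  refine ⟨Nat.div_pos (Nat.le_of_dvd hp1 h1) two_pos, Nat.div_pos (Nat.le_of_dvd hp2 h2) two_pos, ?_⟩
  have c1 : ((l * (m + r₁) / 2 : ℕ) : ℚ) = (l : ℚ) * (m + r₁) / 2 := by
    rw [Nat.cast_div h1 (by norm_num)]; push_cast; ring
  have c2 : ((m * (l + s₂) / 2 : ℕ) : ℚ) = (m : ℚ) * (l + s₂) / 2 := by
    rw [Nat.cast_div h2 (by norm_num)]; push_cast; ring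
  have heq := hiff.mpr hkey
  rw [c1, c2]
  field_simp
  field_simp at heq
  linear_combination -1*heq
end
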